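/- Let c, d be generalized geodesics in a metric space X and t₀ ∈ ℝ. Then d_X(c(t₀), d(t₀)) ≤ e^{|t₀|} · d_FS(c,d) + 2. -/

import Mathlib

/-!
Generalized geodesics are 1-Lipschitz, so `t ↦ d_X(c t, d t)` is 2-Lipschitz. With
`D = d_X(c t₀, d t₀)` it therefore dominates the tent `D - 2|t - t₀|` on
`[t₀ - D/2, t₀ + D/2]`, and it grows at most linearly in `|t|`, so the integrand of `d_FS` is
integrable (without this the Bochner integral would be `0`). As
`e^{-|t|} ≥ e^{-|t₀|} e^{-|t - t₀|}`, integrating the tent gives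
`d_FS(c, d) ≥ e^{-|t₀|} (2e^{-D/2} + D - 2) ≥ e^{-|t₀|} (D - 2)`.
-/

open Metric Real MeasureTheory Set

variable {X : Type*}

/-- Witness data for a generalized geodesic: `c` is locally constant outside the
interval `(a, b)` and restricts to an isometric embedding on `[a, b]`. -/
def GenGeodesicWitness [MetricSpace X] (c : ℝ → X) (a b : EReal) : Prop :=
  a ≤ b ∧ a ≠ ⊤ ∧ b ≠ ⊥ ∧
    (∀ s t : ℝ, (s : EReal) ≤ a → (t : EReal) ≤ a → c s = c t) ∧
    (∀ s t : ℝ, b ≤ (s : EReal) → b ≤ (t : EReal) → c s = c t) ∧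
    (∀ s t : ℝ, a ≤ (s : EReal) → (s : EReal) ≤ b → a ≤ (t : EReal) → (t : EReal) ≤ b →
      dist (c s) (c t) = |s - t|)

/-- A generalized geodesic in a metric space. -/
def IsGenGeodesic [MetricSpace X] (c : ℝ → X) : Prop := ∃ a b : EReal, GenGeodesicWitness c a b

/-- The metric of the flow space `FS(X)`. -/
noncomputable def fsDist [MetricSpace X] (c d : ℝ → X) : ℝ :=
  ∫ t : ℝ, dist (c t) (d t) / (2 * Real.exp |t|)

lemma GenGeodesicWitness.dist_le_sub [MetricSpace X] {c : ℝ → X} {a b : EReal}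
    (hc : GenGeodesicWitness c a b) {s t : ℝ} (hst : s ≤ t) : dist (c s) (c t) ≤ t - s := by
  obtain ⟨hab, haT, hbB, hA, hB, hI⟩ := hc
  by_cases hta : (t : EReal) ≤ a
  · rw [hA s t ((EReal.coe_le_coe_iff.2 hst).trans hta) hta, dist_self]; linarith
  by_cases hbs : b ≤ (s : EReal)
  · rw [hB s t hbs (hbs.trans (EReal.coe_le_coe_iff.2 hst)), dist_self]; linarith
  rw [not_le] at hta hbs
  -- Move `s` and `t` into `[a, b]` without changing `c s`, `c t` or increasing `t - s`.
  obtain ⟨s', hs'a, hs'b, hss', hs't, hcs⟩ :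
      ∃ s' : ℝ, a ≤ s' ∧ (s' : EReal) ≤ b ∧ s ≤ s' ∧ s' ≤ t ∧ c s = c s' := by
    by_cases has : a ≤ (s : EReal)
    · exact ⟨s, has, hbs.le, le_rfl, hst, rfl⟩
    rw [not_le] at has
    lift a to ℝ using ⟨haT, has.ne_bot⟩
    exact ⟨a, le_rfl, hab, by exact_mod_cast has.le, by exact_mod_cast hta.le,
      hA s a has.le le_rfl⟩
  obtain ⟨t', ht'a, ht'b, hst', ht't, hct⟩ :
      ∃ t' : ℝ, a ≤ t' ∧ (t' : EReal) ≤ b ∧ s ≤ t' ∧ t' ≤ t ∧ c t = c t' := by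
    by_cases htb : (t : EReal) ≤ b
    · exact ⟨t, hta.le, htb, hst, le_rfl, rfl⟩
    rw [not_le] at htb
    lift b to ℝ using ⟨htb.ne_top, hbB⟩
    exact ⟨b, hab, le_rfl, by exact_mod_cast hbs.le, by exact_mod_cast htb.le,
      hB t b htb.le le_rfl⟩
  calc dist (c s) (c t) = |s' - t'| := by rw [hcs, hct, hI s' t' hs'a hs'b ht'a ht'b]
    _ ≤ t - s := abs_sub_le_iff.2 ⟨by linarith, by linarith⟩

lemma IsGenGeodesic.lipschitzWith [MetricSpace X] {c : ℝ → X} (hc : IsGenGeodesic c) :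
    LipschitzWith 1 c := by
  obtain ⟨a, b, hab⟩ := hc
  refine LipschitzWith.of_dist_le_mul fun s t => ?_
  rw [NNReal.coe_one, one_mul, Real.dist_eq]
  rcases le_total s t with hst | hts
  · rw [abs_of_nonpos (sub_nonpos.2 hst), neg_sub]
    exact hab.dist_le_sub hst
  · rw [dist_comm, abs_of_nonneg (sub_nonneg.2 hts)]
    exact hab.dist_le_sub hts

lemma LipschitzWith.dist_le_dist_add_two_mul {α β : Type*} [PseudoMetricSpace α]
    [PseudoMetricSpace β] {K : NNReal} {f g : α → β} (hf : LipschitzWith K f)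
    (hg : LipschitzWith K g) (x y : α) :
    dist (f x) (g x) ≤ dist (f y) (g y) + 2 * K * dist x y := by
  have hfxy := hf.dist_le_mul x y
  have hgyx := hg.dist_le_mul y x
  rw [dist_comm y] at hgyx
  linarith [dist_triangle4 (f x) (f y) (g y) (g x), dist_comm (g x) (g y)]

lemma integrable_comp_abs {E : Type*} [NormedAddCommGroup E] {f : ℝ → E}
    (hf : IntegrableOn f (Ioi 0)) : Integrable fun x => f |x| := by
  have hIoi : IntegrableOn (fun x => f |x|) (Ioi 0) :=
    hf.congr_fun (fun x hx => by rw [abs_of_pos hx]) measurableSet_Ioi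
  have hIic : IntegrableOn (fun x => f |x|) (Iic 0) := by
    have hIci : IntegrableOn (fun x => f |x|) (Ici (-0)) := by
      rw [neg_zero]; exact (integrableOn_Ici_iff_integrableOn_Ioi (by finiteness)).2 hIoi
    simpa only [abs_neg] using hIci.comp_neg_Iic
  rw [← integrableOn_univ, ← Iic_union_Ioi (a := (0 : ℝ))]
  exact hIic.union hIoi

lemma integrableOn_Ioi_affine_mul_exp_neg (p q : ℝ) :
    IntegrableOn (fun x => (p + q * x) * exp (-x)) (Ioi 0) := by
  have hexp : IntegrableOn (fun x => exp (-x)) (Ioi 0) := by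
    simpa using exp_neg_integrableOn_Ioi 0 one_pos
  have hmul : IntegrableOn (fun x => exp (-x) * x) (Ioi 0) := by
    simpa [show (2 : ℝ) - 1 = 1 by norm_num] using GammaIntegral_convergent two_pos
  refine IntegrableOn.congr_fun (f := fun x => p * exp (-x) + q * (exp (-x) * x))
    ((hexp.const_mul p).add (hmul.const_mul q)) (fun x _ => by ring) measurableSet_Ioi

lemma integrable_dist_div_two_mul_exp_abs {Y : Type*} [PseudoMetricSpace Y] {c d : ℝ → Y}
    (hc : LipschitzWith 1 c) (hd : LipschitzWith 1 d) :
    Integrable fun t => dist (c t) (d t) / (2 * exp |t|) := by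
  have hcont : Continuous fun t => dist (c t) (d t) / (2 * exp |t|) :=
    (hc.continuous.dist hd.continuous).div (by fun_prop) fun t => by positivity
  refine (integrable_comp_abs (integrableOn_Ioi_affine_mul_exp_neg (dist (c 0) (d 0)) 2)).mono'
    hcont.aestronglyMeasurable (ae_of_all _ fun t => ?_)
  have hgrowth := hc.dist_le_dist_add_two_mul hd t 0
  rw [NNReal.coe_one, mul_one, Real.dist_eq, sub_zero] at hgrowth
  rw [Real.norm_of_nonneg (by positivity), exp_neg, ← div_eq_mul_inv]
  exact div_le_div₀ (by positivity) hgrowth (exp_pos _) (by linarith [exp_pos |t|])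

lemma intervalIntegral.integral_comp_abs {f : ℝ → ℝ} (hf : Continuous f) {L : ℝ}
    (hL : 0 ≤ L) :
    ∫ x in -L..L, f |x| = 2 * ∫ x in 0..L, f x := by
  have hfabs : Continuous fun x => f |x| := hf.comp continuous_abs
  have hright : ∫ x in 0..L, f |x| = ∫ x in 0..L, f x :=
    integral_congr fun x hx => by rw [uIcc_of_le hL] at hx; rw [abs_of_nonneg hx.1]
  have hleft : ∫ x in -L..0, f |x| = ∫ x in 0..L, f |x| := by
    simpa only [abs_neg, neg_zero] using (integral_comp_neg (a := 0) (b := L) fun x => f |x|).symm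
  rw [← integral_add_adjacent_intervals (hfabs.intervalIntegrable _ 0)
    (hfabs.intervalIntegrable 0 _), hleft, hright, two_mul]

lemma integral_tent_mul_exp_neg_abs {L : ℝ} (hL : 0 ≤ L) :
    ∫ x in -L..L, (2 * L - 2 * |x|) * exp (-|x|) = 2 * (2 * exp (-L) + 2 * L - 2) := by
  have hderiv : ∀ x ∈ uIcc 0 L, HasDerivAt (fun x => (2 * x - 2 * L + 2) * exp (-x))
      ((2 * L - 2 * x) * exp (-x)) x := fun x _ => by
    have hlin : HasDerivAt (fun x => 2 * x - 2 * L + 2) 2 x := by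
      simpa using (((hasDerivAt_id x).const_mul 2).sub_const (2 * L)).add_const 2
    exact (hlin.mul (hasDerivAt_neg x).exp).congr_deriv (by ring)
  rw [intervalIntegral.integral_comp_abs (f := fun x => (2 * L - 2 * x) * exp (-x))
      (by fun_prop) hL,
    intervalIntegral.integral_eq_sub_of_hasDerivAt hderiv
      ((by fun_prop : Continuous _).intervalIntegrable _ _)]
  simp only [mul_zero, neg_zero, exp_zero]
  ring

lemma exp_neg_abs_mul_le_fsDist [MetricSpace X] {c d : ℝ → X} (hc : LipschitzWith 1 c)
    (hd : LipschitzWith 1 d) (t₀ : ℝ) :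
    exp (-|t₀|) * (2 * exp (-(dist (c t₀) (d t₀) / 2)) + dist (c t₀) (d t₀) - 2) ≤
      fsDist c d := by
  set L := dist (c t₀) (d t₀) / 2 with hL
  have hL0 : 0 ≤ L := by positivity
  have hD : dist (c t₀) (d t₀) = 2 * L := by rw [hL]; ring
  rw [hD]
  have hint := integrable_dist_div_two_mul_exp_abs hc hd
  have hminorant : ∀ t ∈ Icc (t₀ - L) (t₀ + L),
      exp (-|t₀|) / 2 * ((2 * L - 2 * |t - t₀|) * exp (-|t - t₀|)) ≤
        dist (c t) (d t) / (2 * exp |t|) := fun t ht => by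
    have hdist := hc.dist_le_dist_add_two_mul hd t₀ t
    rw [NNReal.coe_one, mul_one, Real.dist_eq, abs_sub_comm, hD] at hdist
    have hnear : |t - t₀| ≤ L := abs_sub_le_iff.2 ⟨by linarith [ht.2], by linarith [ht.1]⟩
    have hexp : exp (-|t₀|) * exp (-|t - t₀|) ≤ exp (-|t|) := by
      rw [← exp_add]
      exact exp_le_exp.2 (by linarith [abs_sub_abs_le_abs_sub t t₀])
    calc exp (-|t₀|) / 2 * ((2 * L - 2 * |t - t₀|) * exp (-|t - t₀|))
        = (2 * L - 2 * |t - t₀|) * (exp (-|t₀|) * exp (-|t - t₀|)) / 2 := by ring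
      _ ≤ dist (c t) (d t) * exp (-|t|) / 2 := by gcongr; linarith
      _ = dist (c t) (d t) / (2 * exp |t|) := by rw [exp_neg]; field_simp
  calc exp (-|t₀|) * (2 * exp (-L) + 2 * L - 2)
      = exp (-|t₀|) / 2 * ∫ s in -L..L, (2 * L - 2 * |s|) * exp (-|s|) := by
        rw [integral_tent_mul_exp_neg_abs hL0]; ring
    _ = ∫ t in t₀ - L..t₀ + L,
          exp (-|t₀|) / 2 * ((2 * L - 2 * |t - t₀|) * exp (-|t - t₀|)) := by
        rw [intervalIntegral.integral_const_mul, intervalIntegral.integral_comp_sub_right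
          (fun s => (2 * L - 2 * |s|) * exp (-|s|)), sub_sub_cancel_left, add_sub_cancel_left]
    _ ≤ ∫ t in t₀ - L..t₀ + L, dist (c t) (d t) / (2 * exp |t|) :=
        intervalIntegral.integral_mono_on (by linarith)
          ((by fun_prop : Continuous _).intervalIntegrable _ _) hint.intervalIntegrable hminorant
    _ ≤ fsDist c d := by
        rw [intervalIntegral.integral_of_le (by linarith)]
        exact setIntegral_le_integral hint (ae_of_all _ fun t => by positivity)

/-- Comparison of the flow-space metric with the metric on `X`:
`d_X(c(t₀), d(t₀)) ≤ e^{|t₀|} · d_FS(c,d) + 2`. -/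
theorem dist_eval_le [MetricSpace X] (c d : ℝ → X)
    (hc : IsGenGeodesic c) (hd : IsGenGeodesic d) (t₀ : ℝ) :
    dist (c t₀) (d t₀) ≤ Real.exp |t₀| * fsDist c d + 2 := by
  have hlower := exp_neg_abs_mul_le_fsDist hc.lipschitzWith hd.lipschitzWith t₀
  rw [exp_neg, inv_mul_le_iff₀ (exp_pos _)] at hlower
  linarith [exp_pos (-(dist (c t₀) (d t₀) / 2))]
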